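/- arXiv:1603.01442 — 5 statements merged into one kernel-verified Lean document; each statement's English description precedes it below -/
import Mathlib

section
/- Let g:(1,∞)→ℝ⁺ be continuous, positive and differentiable, satisfying lim_{z→1⁺} z^{g(z)} = 1, lim_{z→∞} z^{g(z)} = ∞, and g'(z)/g(z) > -1/(z log z) for all z > 1. Then for σ > 0, the function F(x) = 1 - (x/σ)^{-g(x/σ)} for x > σ and F(x) = 0 for x ≤ σ is a genuine cumulative distribution function: it is nondecreasing, right-continuous, tends to 0 at -∞ and to 1 at +∞. -/
open Real Filter Set Topology

/-!
Since `z ^ g z = exp (g z * log z)` and the hypothesis on `g' / g` says exactly that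
`(g z * log z)' = (g' z * z * log z + g z) / z > 0`, the function `z ↦ z ^ g z` increases on
`(1, ∞)`, from the limit `1` at `1⁺` to `∞`. Hence the tail `(x / σ) ^ (-g (x / σ))` decreases
continuously from `1` to `0`, which is all a distribution function needs.
-/

theorem MonotoneOn.le_of_tendsto_nhdsGT {α β : Type*} [LinearOrder α] [TopologicalSpace α]
    [OrderTopology α] [DenselyOrdered α] [Preorder β] [TopologicalSpace β]
    [OrderClosedTopology β] {f : α → β} {a z : α} {b : β} (hf : MonotoneOn f (Ioi a))
    (hlim : Tendsto f (𝓝[>] a) (𝓝 b)) (hz : a < z) : b ≤ f z :=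
  haveI := nhdsGT_neBot_of_exists_gt ⟨z, hz⟩
  le_of_tendsto hlim <| by
    filter_upwards [Ioc_mem_nhdsGT hz] with w hw using hf hw.1 hz hw.2

/-- `h` is the reciprocal of the tail; the GPL distribution function is the case `h z = z ^ g z`. -/
noncomputable def paretoTypeCdf (h : ℝ → ℝ) (σ x : ℝ) : ℝ :=
  if σ < x then 1 - (h (x / σ))⁻¹ else 0

section ParetoTypeCdf

variable {h : ℝ → ℝ} {σ : ℝ}

theorem paretoTypeCdf_of_le {x : ℝ} (hx : x ≤ σ) : paretoTypeCdf h σ x = 0 :=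
  if_neg hx.not_gt

theorem paretoTypeCdf_of_lt {x : ℝ} (hx : σ < x) :
    paretoTypeCdf h σ x = 1 - (h (x / σ))⁻¹ :=
  if_pos hx

theorem monotone_paretoTypeCdf (hσ : 0 < σ) (hmono : MonotoneOn h (Ioi 1))
    (hone : ∀ z, 1 < z → 1 ≤ h z) : Monotone (paretoTypeCdf h σ) := by
  intro x y hxy
  rcases le_or_gt x σ with hx | hx
  · rw [paretoTypeCdf_of_le hx]
    rcases le_or_gt y σ with hy | hy
    · rw [paretoTypeCdf_of_le hy]
    · rw [paretoTypeCdf_of_lt hy, sub_nonneg]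
      exact inv_le_one_of_one_le₀ (hone _ ((one_lt_div hσ).2 hy))
  · have hy : σ < y := hx.trans_le hxy
    have hx' : 1 < x / σ := (one_lt_div hσ).2 hx
    have hy' : 1 < y / σ := (one_lt_div hσ).2 hy
    rw [paretoTypeCdf_of_lt hx, paretoTypeCdf_of_lt hy]
    exact sub_le_sub_left (inv_anti₀ (zero_lt_one.trans_le (hone _ hx'))
      (hmono hx' hy' (div_le_div_of_nonneg_right hxy hσ.le))) 1

theorem continuousWithinAt_Ici_paretoTypeCdf (hσ : 0 < σ) (hcont : ContinuousOn h (Ioi 1))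
    (hne : ∀ z, 1 < z → h z ≠ 0) (hlim : Tendsto h (𝓝[>] 1) (𝓝 1)) (x : ℝ) :
    ContinuousWithinAt (paretoTypeCdf h σ) (Ici x) x := by
  rcases lt_trichotomy x σ with hx | rfl | hx
  · refine (continuousAt_const.congr (f := fun _ => (0 : ℝ)) ?_).continuousWithinAt
    filter_upwards [Iio_mem_nhds hx] with y hy
    exact (paretoTypeCdf_of_le hy.le).symm
  · rw [← continuousWithinAt_Ioi_iff_Ici, ContinuousWithinAt, paretoTypeCdf_of_le le_rfl]
    have hscale : Tendsto (fun y => y / x) (𝓝[>] x) (𝓝[>] 1) := by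
      refine tendsto_nhdsWithin_of_tendsto_nhds_of_eventually_within _ ?_ ?_
      · exact ((continuous_id.div_const x).tendsto' x 1 (div_self hσ.ne')).mono_left
          nhdsWithin_le_nhds
      · filter_upwards [self_mem_nhdsWithin] with y hy using (one_lt_div hσ).2 hy
    have hlim' := tendsto_const_nhds (x := (1 : ℝ)).sub ((hlim.comp hscale).inv₀ one_ne_zero)
    rw [inv_one, sub_self] at hlim'
    refine hlim'.congr' ?_
    filter_upwards [self_mem_nhdsWithin] with y hy using (paretoTypeCdf_of_lt hy).symm
  · have hx' : 1 < x / σ := (one_lt_div hσ).2 hx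
    have hG : ContinuousAt (fun y => 1 - (h (y / σ))⁻¹) x :=
      continuousAt_const.sub <| ((hcont.continuousAt (Ioi_mem_nhds hx')).comp
        (f := fun y => y / σ) (continuousAt_id.div_const σ)).inv₀ (hne _ hx')
    refine (hG.congr ?_).continuousWithinAt
    filter_upwards [Ioi_mem_nhds hx] with y hy using (paretoTypeCdf_of_lt hy).symm

theorem tendsto_paretoTypeCdf_atBot : Tendsto (paretoTypeCdf h σ) atBot (𝓝 0) :=
  tendsto_const_nhds.congr' <| by
    filter_upwards [eventually_le_atBot σ] with y hy using (paretoTypeCdf_of_le hy).symm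

theorem tendsto_paretoTypeCdf_atTop (hσ : 0 < σ) (hlim : Tendsto h atTop atTop) :
    Tendsto (paretoTypeCdf h σ) atTop (𝓝 1) := by
  have hlim' := tendsto_const_nhds (x := (1 : ℝ)).sub
    (hlim.comp (tendsto_id.atTop_div_const hσ)).inv_tendsto_atTop
  rw [sub_zero] at hlim'
  refine hlim'.congr' ?_
  filter_upwards [eventually_gt_atTop σ] with y hy using (paretoTypeCdf_of_lt hy).symm

end ParetoTypeCdf

section RpowSelf

variable {g : ℝ → ℝ}

theorem strictMonoOn_mul_log (hpos : ∀ z, 1 < z → 0 < g z)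
    (hdiff : ∀ z, 1 < z → DifferentiableAt ℝ g z)
    (hineq : ∀ z, 1 < z → deriv g z / g z > -1 / (z * log z)) :
    StrictMonoOn (fun z => g z * log z) (Ioi 1) := by
  have hderiv : ∀ z ∈ Ioi (1 : ℝ),
      HasDerivAt (fun z => g z * log z) (deriv g z * log z + g z * z⁻¹) z := fun z hz =>
    (hdiff z hz).hasDerivAt.mul (hasDerivAt_log (zero_lt_one.trans hz).ne')
  refine strictMonoOn_of_hasDerivWithinAt_pos (convex_Ioi 1)
    (fun z hz => (hderiv z hz).continuousAt.continuousWithinAt)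
    (fun z hz => (hderiv z (interior_subset hz)).hasDerivWithinAt) fun z hz => ?_
  rw [interior_Ioi] at hz
  have hz0 : 0 < z := zero_lt_one.trans hz
  have hlog : 0 < log z := log_pos hz
  have hnum : 0 < deriv g z * (z * log z) + g z := by
    have := (div_lt_div_iff₀ (by positivity) (hpos z hz)).1 (hineq z hz)
    linarith
  calc 0 < (deriv g z * (z * log z) + g z) / z := div_pos hnum hz0
    _ = deriv g z * log z + g z * z⁻¹ := by field_simp

theorem strictMonoOn_rpow_self (hpos : ∀ z, 1 < z → 0 < g z)
    (hdiff : ∀ z, 1 < z → DifferentiableAt ℝ g z)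
    (hineq : ∀ z, 1 < z → deriv g z / g z > -1 / (z * log z)) :
    StrictMonoOn (fun z => z ^ g z) (Ioi 1) := by
  intro a ha b hb hab
  simp only [rpow_def_of_pos (zero_lt_one.trans ha), rpow_def_of_pos (zero_lt_one.trans hb),
    mul_comm (log _)]
  exact exp_lt_exp.2 (strictMonoOn_mul_log hpos hdiff hineq ha hb hab)

theorem continuousOn_rpow_self (hdiff : ∀ z, 1 < z → DifferentiableAt ℝ g z) :
    ContinuousOn (fun z => z ^ g z) (Ioi 1) :=
  continuousOn_id.rpow (fun z hz => (hdiff z hz).continuousAt.continuousWithinAt)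
    fun _ hz => Or.inl (zero_lt_one.trans hz).ne'

end RpowSelf

theorem gpl_is_cdf_general (g : ℝ → ℝ) (σ : ℝ) (hσ : 0 < σ)
    (hpos : ∀ z, 1 < z → 0 < g z)
    (hdiff : ∀ z, 1 < z → DifferentiableAt ℝ g z)
    (hlim1 : Tendsto (fun z => z ^ g z) (𝓝[>] (1 : ℝ)) (𝓝 1))
    (hlim2 : Tendsto (fun z => z ^ g z) atTop atTop)
    (hineq : ∀ z, 1 < z → deriv g z / g z > -1 / (z * Real.log z))
    (F : ℝ → ℝ)
    (hF : ∀ x, F x = if σ < x then 1 - (x / σ) ^ (-(g (x / σ))) else 0) :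
    Monotone F ∧ (∀ x, ContinuousWithinAt F (Set.Ici x) x) ∧
      Tendsto F atBot (𝓝 0) ∧ Tendsto F atTop (𝓝 1) := by
  have hmono : MonotoneOn (fun z => z ^ g z) (Ioi 1) :=
    (strictMonoOn_rpow_self hpos hdiff hineq).monotoneOn
  have hone : ∀ z, 1 < z → 1 ≤ z ^ g z := fun z hz => hmono.le_of_tendsto_nhdsGT hlim1 hz
  obtain rfl : F = paretoTypeCdf (fun z => z ^ g z) σ := by
    funext x
    rw [hF, paretoTypeCdf]
    split_ifs with hx
    · rw [rpow_neg (div_pos (hσ.trans hx) hσ).le]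
    · rfl
  exact ⟨monotone_paretoTypeCdf hσ hmono hone,
    continuousWithinAt_Ici_paretoTypeCdf hσ (continuousOn_rpow_self hdiff)
      (fun z hz => (zero_lt_one.trans_le (hone z hz)).ne') hlim1,
    tendsto_paretoTypeCdf_atBot, tendsto_paretoTypeCdf_atTop hσ hlim2⟩

/-- If g:(1,∞)→ℝ⁺ is continuous, positive and differentiable with
lim_{z→1⁺} z^{g z} = 1, lim_{z→∞} z^{g z} = ∞ and g'(z)/g(z) > -1/(z log z) on (1,∞),
then F(x) = 1 - (x/σ)^{-g(x/σ)} for x > σ, F(x) = 0 otherwise, is a genuine cdf. -/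
theorem gpl_is_cdf (g : ℝ → ℝ) (σ : ℝ) (hσ : 0 < σ)
    (hpos : ∀ z, 1 < z → 0 < g z)
    (hcont : ContinuousOn g (Set.Ioi 1))
    (hdiff : ∀ z, 1 < z → DifferentiableAt ℝ g z)
    (hlim1 : Tendsto (fun z => z ^ g z) (𝓝[>] (1 : ℝ)) (𝓝 1))
    (hlim2 : Tendsto (fun z => z ^ g z) atTop atTop)
    (hineq : ∀ z, 1 < z → deriv g z / g z > -1 / (z * Real.log z))
    (F : ℝ → ℝ)
    (hF : ∀ x, F x = if σ < x then 1 - (x / σ) ^ (-(g (x / σ))) else 0) :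
    Monotone F ∧ (∀ x, ContinuousWithinAt F (Set.Ici x) x) ∧
      Tendsto F atBot (𝓝 0) ∧ Tendsto F atTop (𝓝 1) :=
  gpl_is_cdf_general g σ hσ hpos hdiff hlim1 hlim2 hineq F hF
end

section
/- For α > 0 and β > -1, the function g(z) = α (log z / (1 + log z))^β satisfies the GPL conditions: lim_{z→1⁺} z^{g(z)} = 1, lim_{z→∞} z^{g(z)} = ∞, and g'(z)/g(z) > -1/(z log z) for all z > 1. -/
open Real Filter Set Topology

/-!
Write `l = log z` and `t = l / (1 + l)`, so that `z ^ g z = exp (α * t ^ β * l)`.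
As `z → 1⁺`, `l → 0⁺` and `t ^ β * l = l ^ (β + 1) / (1 + l) ^ β → 0` because `β + 1 > 0`;
as `z → ∞`, `t → 1`, so the exponent tends to `∞`. Differentiating,
`g' z / g z = β / (z * l * (1 + l))`, which exceeds `-1 / (z * l) = -(1 + l) / (z * l * (1 + l))`
because `β > -1 > -(1 + l)`.
-/

lemma tendsto_div_one_add_atTop : Tendsto (fun x : ℝ => x / (1 + x)) atTop (𝓝 1) := by
  have h : Tendsto (fun x : ℝ => 1 - (1 + x)⁻¹) atTop (𝓝 (1 - 0)) :=
    tendsto_const_nhds.sub <|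
      tendsto_inv_atTop_zero.comp (tendsto_atTop_add_const_left _ 1 tendsto_id)
  rw [sub_zero] at h
  refine h.congr' ?_
  filter_upwards [eventually_gt_atTop 0] with x hx
  field_simp
  ring

lemma tendsto_log_nhdsGT_one : Tendsto log (𝓝[>] 1) (𝓝[>] 0) := by
  refine tendsto_nhdsWithin_iff.2 ⟨?_, ?_⟩
  · simpa using (continuousAt_log one_ne_zero).tendsto.mono_left nhdsWithin_le_nhds
  · filter_upwards [self_mem_nhdsWithin] with z hz using log_pos hz

lemma tendsto_div_one_add_rpow_mul_nhdsGT_zero {β : ℝ} (hβ : -1 < β) :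
    Tendsto (fun x : ℝ => (x / (1 + x)) ^ β * x) (𝓝[>] 0) (𝓝 0) := by
  have hcont : ContinuousAt (fun x : ℝ => x ^ (β + 1) / (1 + x) ^ β) 0 :=
    (continuousAt_id.rpow_const (Or.inr (by linarith))).div
      ((continuousAt_const.add continuousAt_id).rpow_const (Or.inl (by norm_num))) (by simp)
  have h := hcont.tendsto.mono_left (nhdsWithin_le_nhds (s := Ioi 0))
  rw [zero_rpow (by linarith), zero_div] at h
  refine h.congr' ?_
  filter_upwards [self_mem_nhdsWithin] with x (hx : 0 < x)
  rw [div_rpow hx.le (by positivity), rpow_add_one hx.ne']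
  ring

lemma hasDerivAt_log_div_one_add_log_rpow (β : ℝ) {z : ℝ} (hlog : log z ≠ 0)
    (hlog' : 1 + log z ≠ 0) :
    HasDerivAt (fun z => (log z / (1 + log z)) ^ β)
      (β * (log z / (1 + log z)) ^ β / (z * log z * (1 + log z))) z := by
  have hz : z ≠ 0 := by rintro rfl; simp at hlog
  have ht : log z / (1 + log z) ≠ 0 := div_ne_zero hlog hlog'
  have h := ((hasDerivAt_log hz).div ((hasDerivAt_log hz).const_add 1) hlog').rpow_const
    (p := β) (Or.inl ht)
  refine h.congr_deriv ?_
  simp only [Pi.div_apply]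
  rw [rpow_sub_one ht]
  field_simp
  ring

lemma neg_one_div_mul_log_lt_deriv_div {α β z : ℝ} (hα : α ≠ 0) (hβ : -1 < β) (hz : 1 < z) :
    -1 / (z * log z) < deriv (fun z => α * (log z / (1 + log z)) ^ β) z /
      (α * (log z / (1 + log z)) ^ β) := by
  have hl : 0 < log z := log_pos hz
  have hz0 : 0 < z := by linarith
  have hratio : deriv (fun z => α * (log z / (1 + log z)) ^ β) z /
      (α * (log z / (1 + log z)) ^ β) = β / (z * log z * (1 + log z)) := by
    rw [((hasDerivAt_log_div_one_add_log_rpow β hl.ne' (by positivity)).const_mul α).deriv]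
    field_simp
  have hbound : -1 / (z * log z) = -(1 + log z) / (z * log z * (1 + log z)) := by
    field_simp
  rw [hratio, hbound]
  exact div_lt_div_of_pos_right (by linarith) (by positivity)

/-- for α > 0 and β > -1, g(z) = α (log z / (1 + log z))^β satisfies the GPL conditions. -/
theorem gpl_relevant_satisfies_gpl (α β : ℝ) (hα : 0 < α) (hβ : -1 < β)
    (g : ℝ → ℝ) (hg : ∀ z, g z = α * (Real.log z / (1 + Real.log z)) ^ β) :
    Tendsto (fun z => z ^ g z) (𝓝[>] (1 : ℝ)) (𝓝 1) ∧
    Tendsto (fun z => z ^ g z) atTop atTop ∧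
    (∀ z, 1 < z → deriv g z / g z > -1 / (z * Real.log z)) := by
  have hexp : ∀ z, 0 < z → exp (log z * g z) = z ^ g z := fun z hz =>
    (rpow_def_of_pos hz _).symm
  refine ⟨?_, ?_, fun z hz => ?_⟩
  · have hlim : Tendsto (fun z => log z * g z) (𝓝[>] 1) (𝓝 0) := by
      have h := ((tendsto_div_one_add_rpow_mul_nhdsGT_zero hβ).comp
        tendsto_log_nhdsGT_one).const_mul α
      rw [mul_zero] at h
      refine h.congr fun z => ?_
      simp only [Function.comp_apply, hg]
      ring
    have h := (continuous_exp.tendsto 0).comp hlim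
    rw [exp_zero] at h
    refine h.congr' ?_
    filter_upwards [self_mem_nhdsWithin] with z (hz : 1 < z) using hexp z (by linarith)
  · have h : Tendsto g atTop (𝓝 α) := by
      have ht := (tendsto_div_one_add_atTop.comp tendsto_log_atTop).rpow_const (p := β)
        (Or.inl one_ne_zero)
      rw [funext hg]
      simpa using ht.const_mul α
    refine (tendsto_exp_atTop.comp (tendsto_log_atTop.atTop_mul_pos hα h)).congr' ?_
    filter_upwards [eventually_gt_atTop 0] with z hz using hexp z hz
  · rw [funext hg]
    exact neg_one_div_mul_log_lt_deriv_div hα.ne' hβ hz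
end

section
/- The survival function S(x) = exp{-α [log(x/σ)]^{β+1}/[log(x/σ)+1]^β} of the GPL(α,β,σ) distribution is regularly varying at infinity with index -α: for every t > 0, lim_{x→∞} S(tx)/S(x) = t^{-α}. -/
/-!
Put `L = log (x / σ)` and `g L = L ^ (β + 1) / (L + 1) ^ β`, so that `S x = exp (-α g L)` and
`S (t x) = exp (-α g (L + log t))`. Since `g L = L · (L / (L + 1)) ^ β` and `y ↦ y ^ β` has
derivative `β` at `1`, `g L - L → -β`; hence `g (L + log t) - g L → log t`, and
`S (t x) / S x → exp (-α log t) = t ^ (-α)`.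
-/

open Real Filter Topology

lemma tendsto_div_add_one_nhdsLT_one :
    Tendsto (fun L : ℝ => L / (L + 1)) atTop (𝓝[<] 1) := by
  have hlim : Tendsto (fun L : ℝ => 1 - (L + 1)⁻¹) atTop (𝓝 1) := by
    simpa using (tendsto_const_nhds (x := (1 : ℝ))).sub
      (tendsto_atTop_add_const_right atTop (1 : ℝ) tendsto_id).inv_tendsto_atTop
  refine tendsto_nhdsWithin_iff.mpr ⟨hlim.congr' ?_, ?_⟩ <;>
    filter_upwards [eventually_gt_atTop 0] with L hL
  · field_simp
    ring
  · exact (div_lt_one (by linarith : (0 : ℝ) < L + 1)).mpr (by linarith)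

lemma tendsto_rpow_add_one_div_add_one_rpow_sub_self (β : ℝ) :
    Tendsto (fun L : ℝ => L ^ (β + 1) / (L + 1) ^ β - L) atTop (𝓝 (-β)) := by
  have hslope : Tendsto (slope (fun y : ℝ => y ^ β) 1) (𝓝[≠] 1) (𝓝 β) := by
    simpa using hasDerivAt_iff_tendsto_slope.mp
      (hasDerivAt_rpow_const (x := 1) (p := β) (Or.inl one_ne_zero))
  have hq := tendsto_div_add_one_nhdsLT_one
  have hprod := (tendsto_nhds_of_tendsto_nhdsWithin hq).neg.mul
    (hslope.comp (hq.mono_right (nhdsWithin_mono _ fun _ h => ne_of_lt h)))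
  rw [neg_one_mul] at hprod
  refine hprod.congr' ?_
  filter_upwards [eventually_gt_atTop 0] with L hL
  have hL1 : (0 : ℝ) < L + 1 := by linarith
  -- `L ^ (β + 1) / (L + 1) ^ β - L = -q · slope (· ^ β) 1 q` with `q = L / (L + 1)`
  have hne : (L + 1) ^ β ≠ 0 := by positivity
  simp only [Function.comp_apply, slope_def_field, one_rpow, div_rpow hL.le hL1.le,
    rpow_add_one hL.ne']
  field_simp
  ring

lemma Filter.Tendsto.sub_comp_add_const {g : ℝ → ℝ} {a : ℝ}
    (h : Tendsto (fun L => g L - L) atTop (𝓝 a)) (c : ℝ) :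
    Tendsto (fun L => g (L + c) - g L) atTop (𝓝 c) := by
  have hshift := h.comp (tendsto_atTop_add_const_right atTop c tendsto_id)
  simpa using ((hshift.sub h).add_const c).congr fun L => by simp; ring

theorem gpl_regularly_varying_general (α β σ : ℝ) (hσ : 0 < σ)
    (S : ℝ → ℝ)
    (hS : ∀ x, σ ≤ x →
      S x = Real.exp (-α * (Real.log (x / σ)) ^ (β + 1) / (Real.log (x / σ) + 1) ^ β)) :
    ∀ t : ℝ, 0 < t → Tendsto (fun x => S (t * x) / S x) atTop (𝓝 (t ^ (-α))) := by
  intro t ht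
  let g : ℝ → ℝ := fun L => L ^ (β + 1) / (L + 1) ^ β
  have hL : Tendsto (fun x : ℝ => log (x / σ)) atTop atTop :=
    tendsto_log_atTop.comp (tendsto_id.atTop_div_const hσ)
  have hshift :
      Tendsto (fun x => g (log (x / σ) + log t) - g (log (x / σ))) atTop (𝓝 (log t)) :=
    ((tendsto_rpow_add_one_div_add_one_rpow_sub_self β).sub_comp_add_const _).comp hL
  have hlim : Tendsto (fun x => exp (-α * (g (log (x / σ) + log t) - g (log (x / σ)))))
      atTop (𝓝 (exp (-α * log t))) :=
    (continuous_exp.tendsto _).comp (hshift.const_mul _)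
  rw [rpow_def_of_pos ht, mul_comm]
  refine hlim.congr' ?_
  filter_upwards [eventually_ge_atTop σ, eventually_ge_atTop (σ / t)] with x hx htx
  have hx0 : 0 < x := hσ.trans_le hx
  have hlog : log (t * x / σ) = log (x / σ) + log t := by
    rw [mul_div_assoc, log_mul ht.ne' (by positivity), add_comm]
  rw [hS x hx, hS (t * x) ((div_le_iff₀' ht).mp htx), ← exp_sub, hlog]
  congr 1
  simp only [g]
  ring

/-- the GPL(α,β,σ) survival function is regularly varying at infinity
with index -α: for every t > 0, lim_{x→∞} S(tx)/S(x) = t^{-α}. -/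
theorem gpl_regularly_varying (α β σ : ℝ) (hα : 0 < α) (hβ : -1 < β) (hσ : 0 < σ)
    (S : ℝ → ℝ)
    (hS : ∀ x, σ ≤ x →
      S x = Real.exp (-α * (Real.log (x / σ)) ^ (β + 1) / (Real.log (x / σ) + 1) ^ β)) :
    ∀ t : ℝ, 0 < t → Tendsto (fun x => S (t * x) / S x) atTop (𝓝 (t ^ (-α))) :=
  gpl_regularly_varying_general α β σ hσ S hS
end

section
/- The function L(x) = (x/σ)^{-α([log(x/σ)/(log(x/σ)+1)]^β - 1)} is slowly varying at infinity: for every t > 0, lim_{x→∞} L(tx)/L(x) = 1. Consequently the GPL(α,β,σ) survival function factors as S(x) = L(x)(x/σ)^{-α}. -/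
/-!
Put `u = log (x / σ)`. Then `log L x = -α ((u / (u + 1)) ^ β - 1) u`, and since
`(u / (u + 1)) ^ β = (1 - 1 / (u + 1)) ^ β ≈ 1 - β / (u + 1)`, this tends to the finite
limit `α β`.
A function of the form `exp ∘ f` with `f` convergent at infinity is slowly varying, as
`f (t x) - f x → 0`. The factorisation is the identity
`u ^ (β + 1) / (u + 1) ^ β = ((u / (u + 1)) ^ β - 1) u + u` in the exponent.
-/

open Real Filter Topology

theorem tendsto_div_add_one_rpow_sub_one_mul_atTop (β : ℝ) :
    Tendsto (fun u : ℝ => ((u / (u + 1)) ^ β - 1) * u) atTop (𝓝 (-β)) := by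
  have hslope : Tendsto (fun v : ℝ => v⁻¹ * ((1 + v) ^ β - 1)) (𝓝[<] 0) (𝓝 β) := by
    simpa using
      (hasDerivAt_rpow_const (x := 1) (p := β) (Or.inl one_ne_zero)).tendsto_slope_zero_left
  have hv : Tendsto (fun u : ℝ => -(u + 1)⁻¹) atTop (𝓝[<] 0) := by
    refine tendsto_nhdsWithin_iff.2 ⟨?_, ?_⟩
    · simpa using (tendsto_atTop_add_const_right atTop (1 : ℝ) tendsto_id).inv_tendsto_atTop.neg
    · filter_upwards [eventually_gt_atTop (-1)] with u hu
      have hu1 : 0 < u + 1 := by linarith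
      exact neg_neg_of_pos (inv_pos.2 hu1)
  have hvu : Tendsto (fun u : ℝ => -(u + 1)⁻¹ * u) atTop (𝓝 (-1)) := by
    have : Tendsto (fun u : ℝ => (u + 1)⁻¹ - 1) atTop (𝓝 (-1)) := by
      simpa using
        (tendsto_atTop_add_const_right atTop (1 : ℝ) tendsto_id).inv_tendsto_atTop.sub_const 1
    refine this.congr' ?_
    filter_upwards [eventually_gt_atTop (-1)] with u hu
    field_simp [(by linarith : u + 1 ≠ 0)]
    ring
  have := (hslope.comp hv).mul hvu
  rw [mul_neg_one] at this
  refine this.congr' ?_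
  filter_upwards [eventually_gt_atTop (-1)] with u hu
  have hu1 : u + 1 ≠ 0 := by linarith
  have hbase : 1 + -(u + 1)⁻¹ = u / (u + 1) := by field_simp; ring
  simp only [Function.comp_apply, hbase]
  field_simp

theorem rpow_add_one_div_add_one_rpow {u : ℝ} (hu : 0 < u) (β : ℝ) :
    u ^ (β + 1) / (u + 1) ^ β = ((u / (u + 1)) ^ β - 1) * u + u := by
  rw [div_rpow hu.le (by linarith), rpow_add_one hu.ne']
  ring

def IsSlowlyVarying (L : ℝ → ℝ) : Prop :=
  ∀ t : ℝ, 0 < t → Tendsto (fun x => L (t * x) / L x) atTop (𝓝 1)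

theorem IsSlowlyVarying.of_eventuallyEq_exp {L f : ℝ → ℝ} {c : ℝ} (hf : Tendsto f atTop (𝓝 c))
    (hL : ∀ᶠ x in atTop, L x = exp (f x)) : IsSlowlyVarying L := by
  intro t ht
  have htx : Tendsto (fun x => t * x) atTop atTop := tendsto_id.const_mul_atTop ht
  have hdiff : Tendsto (fun x => f (t * x) - f x) atTop (𝓝 0) := by
    simpa using (hf.comp htx).sub hf
  have hexp : Tendsto (fun x => exp (f (t * x) - f x)) atTop (𝓝 1) := by
    simpa [Function.comp_def] using (continuous_exp.tendsto 0).comp hdiff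
  refine hexp.congr' ?_
  filter_upwards [hL, htx.eventually hL] with x hx htx
  rw [hx, htx, exp_sub]

theorem gpl_slowly_varying_factor_general (α β σ : ℝ) (hσ : 0 < σ)
    (S L : ℝ → ℝ)
    (hS : ∀ x, σ ≤ x →
      S x = Real.exp (-α * (Real.log (x / σ)) ^ (β + 1) / (Real.log (x / σ) + 1) ^ β))
    (hL : ∀ x, L x =
      (x / σ) ^ (-α * ((Real.log (x / σ) / (Real.log (x / σ) + 1)) ^ β - 1))) :
    (∀ t : ℝ, 0 < t → Tendsto (fun x => L (t * x) / L x) atTop (𝓝 1)) ∧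
    (∀ x, σ < x → S x = L x * (x / σ) ^ (-α)) := by
  have hL_exp : ∀ x, 0 < x → L x =
      exp (-α * (((log (x / σ) / (log (x / σ) + 1)) ^ β - 1) * log (x / σ))) := by
    intro x hx
    rw [hL, rpow_def_of_pos (div_pos hx hσ), mul_comm, mul_assoc]
  have hlog_L : Tendsto
      (fun x => -α * (((log (x / σ) / (log (x / σ) + 1)) ^ β - 1) * log (x / σ)))
      atTop (𝓝 (-α * -β)) :=
    ((tendsto_div_add_one_rpow_sub_one_mul_atTop β).const_mul (-α)).comp
      (tendsto_log_atTop.comp (tendsto_id.atTop_div_const hσ))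
  refine ⟨IsSlowlyVarying.of_eventuallyEq_exp hlog_L ((eventually_gt_atTop 0).mono hL_exp),
    fun x hx => ?_⟩
  have hu : 0 < log (x / σ) := log_pos ((one_lt_div hσ).2 hx)
  rw [hS x hx.le, hL_exp x (hσ.trans hx), rpow_def_of_pos (div_pos (hσ.trans hx) hσ), ← exp_add,
    mul_div_assoc, rpow_add_one_div_add_one_rpow hu]
  congr 1
  ring

/-- L(x) = (x/σ)^{-α([log(x/σ)/(log(x/σ)+1)]^β - 1)} is slowly varying at
infinity, and the GPL(α,β,σ) survival function factors as S(x) = L(x) (x/σ)^{-α}. -/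
theorem gpl_slowly_varying_factor (α β σ : ℝ) (hα : 0 < α) (hβ : -1 < β) (hσ : 0 < σ)
    (S L : ℝ → ℝ)
    (hS : ∀ x, σ ≤ x →
      S x = Real.exp (-α * (Real.log (x / σ)) ^ (β + 1) / (Real.log (x / σ) + 1) ^ β))
    (hL : ∀ x, L x =
      (x / σ) ^ (-α * ((Real.log (x / σ) / (Real.log (x / σ) + 1)) ^ β - 1))) :
    (∀ t : ℝ, 0 < t → Tendsto (fun x => L (t * x) / L x) atTop (𝓝 1)) ∧
    (∀ x, σ < x → S x = L x * (x / σ) ^ (-α)) :=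
  gpl_slowly_varying_factor_general α β σ hσ S L hS hL
end

section
/- The GPL(α,β,σ) distribution satisfies the von Mises condition for the Fréchet domain of attraction: lim_{x→∞} x f(x)/S(x) = α, where f is the density and S the survival function. Equivalently, lim_{x→∞} α [(log(x/σ)+1+β)/(log(x/σ)+1)] [log(x/σ)/(log(x/σ)+1)]^β = α. -/
open Real Filter Topology

/-- The hazard rate of GPL(α,β,σ) at `x`, multiplied by `x` and written in the variable
`L = log (x / σ)`. -/
noncomputable def gplScaledHazard (α β L : ℝ) : ℝ :=
  α * ((L + 1 + β) / (L + 1)) * (L / (L + 1)) ^ β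

theorem tendsto_add_one_add_div_add_one_atTop (c : ℝ) :
    Tendsto (fun L : ℝ => (L + 1 + c) / (L + 1)) atTop (𝓝 1) := by
  have hdecay : Tendsto (fun L : ℝ => c / (L + 1)) atTop (𝓝 0) :=
    tendsto_const_nhds.div_atTop (tendsto_atTop_add_const_right _ 1 tendsto_id)
  have hsum : Tendsto (fun L : ℝ => 1 + c / (L + 1)) atTop (𝓝 1) := by
    simpa using hdecay.const_add 1
  refine hsum.congr' ?_
  filter_upwards [eventually_gt_atTop 0] with L hL
  field_simp

theorem tendsto_div_add_one_rpow_atTop (β : ℝ) :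
    Tendsto (fun L : ℝ => (L / (L + 1)) ^ β) atTop (𝓝 1) := by
  have hbase : Tendsto (fun L : ℝ => L / (L + 1)) atTop (𝓝 1) := by
    simpa using tendsto_add_one_add_div_add_one_atTop (-1)
  simpa using hbase.rpow_const (Or.inl one_ne_zero) (p := β)

theorem tendsto_gplScaledHazard_atTop (α β : ℝ) :
    Tendsto (gplScaledHazard α β) atTop (𝓝 α) := by
  have hlimit := ((tendsto_const_nhds (x := α)).mul
    (tendsto_add_one_add_div_add_one_atTop β)).mul (tendsto_div_add_one_rpow_atTop β)
  rw [mul_one, mul_one] at hlimit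
  exact hlimit

theorem gpl_von_mises_general (α β σ : ℝ) (hσ : 0 < σ)
    (S f : ℝ → ℝ)
    (hS : ∀ x, σ ≤ x →
      S x = Real.exp (-α * (Real.log (x / σ)) ^ (β + 1) / (Real.log (x / σ) + 1) ^ β))
    (hf : ∀ x, σ ≤ x →
      f x = (α / x) * ((Real.log (x / σ) + 1 + β) / (Real.log (x / σ) + 1)) *
        (Real.log (x / σ) / (Real.log (x / σ) + 1)) ^ β * S x) :
    Tendsto (fun x => x * f x / S x) atTop (𝓝 α) ∧
    Tendsto (fun x => α * ((Real.log (x / σ) + 1 + β) / (Real.log (x / σ) + 1)) *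
      (Real.log (x / σ) / (Real.log (x / σ) + 1)) ^ β) atTop (𝓝 α) := by
  have hlog : Tendsto (fun x => Real.log (x / σ)) atTop atTop :=
    Real.tendsto_log_atTop.comp (tendsto_id.atTop_div_const hσ)
  have hhazard := (tendsto_gplScaledHazard_atTop α β).comp hlog
  refine ⟨hhazard.congr' ?_, hhazard⟩
  filter_upwards [eventually_ge_atTop σ] with x hx
  have hx0 : x ≠ 0 := (hσ.trans_le hx).ne'
  have hS0 : S x ≠ 0 := by rw [hS x hx]; exact (Real.exp_pos _).ne'
  simp only [Function.comp_apply, gplScaledHazard, hf x hx]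
  field_simp

/-- the GPL(α,β,σ) distribution satisfies the von Mises condition for the
Fréchet domain of attraction: lim_{x→∞} x f(x)/S(x) = α. -/
theorem gpl_von_mises (α β σ : ℝ) (hα : 0 < α) (hβ : -1 < β) (hσ : 0 < σ)
    (S f : ℝ → ℝ)
    (hS : ∀ x, σ ≤ x →
      S x = Real.exp (-α * (Real.log (x / σ)) ^ (β + 1) / (Real.log (x / σ) + 1) ^ β))
    (hf : ∀ x, σ ≤ x →
      f x = (α / x) * ((Real.log (x / σ) + 1 + β) / (Real.log (x / σ) + 1)) *
        (Real.log (x / σ) / (Real.log (x / σ) + 1)) ^ β * S x) :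
    Tendsto (fun x => x * f x / S x) atTop (𝓝 α) ∧
    Tendsto (fun x => α * ((Real.log (x / σ) + 1 + β) / (Real.log (x / σ) + 1)) *
      (Real.log (x / σ) / (Real.log (x / σ) + 1)) ^ β) atTop (𝓝 α) :=
  gpl_von_mises_general α β σ hσ S f hS hf
end
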